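/- arXiv:2505.11656 — 8 statements merged into one kernel-verified Lean document; each statement's English description precedes it below -/
import Mathlib

section
/- Every Markov shift Λ ⊆ A^ℤ (over an arbitrary, possibly infinite, alphabet A) has the property of nested cylinders: every decreasing sequence of nonempty cylinder sets of Λ has nonempty intersection. -/
/-- Every Markov shift Λ ⊆ A^ℤ (arbitrary alphabet) has the
property of nested cylinders. -/
theorem stmt2 {A : Type*} (T : Set (A × A)) (Λ : Set (ℤ → A))
    (hΛ : Λ = {x : ℤ → A | ∀ i : ℤ, (x i, x (i + 1)) ∈ T})
    (W : ℕ → Set (ℤ → A))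
    (hcyl : ∀ ℓ, ∃ (s : Finset ℤ) (a : ℤ → A),
      W ℓ = {x ∈ Λ | ∀ i ∈ s, x i = a i})
    (hne : ∀ ℓ, (W ℓ).Nonempty)
    (hnested : ∀ ℓ, W (ℓ + 1) ⊆ W ℓ) :
    (⋂ ℓ, W ℓ).Nonempty := by
  classical
  choose s a hW using hcyl
  choose x hx using hne
  have hanti : Antitone W := antitone_nat_of_succ_le (fun n => hnested n)
  have hmem : ∀ ℓ z, z ∈ W ℓ ↔ z ∈ Λ ∧ ∀ i ∈ s ℓ, z i = a ℓ i := by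
    intro ℓ z; rw [hW ℓ]; exact Set.mem_sep_iff
  set C : Set ℤ := ⋃ ℓ, (s ℓ : Set ℤ) with hC
  have hCmem : ∀ c : ℤ, c ∈ C ↔ ∃ k, c ∈ s k := by
    intro c; simp [hC]
  set K : ℤ → ℕ := fun c => if h : c ∈ C then ((hCmem c).1 h).choose else 0 with hKdef
  have hKs : ∀ c ∈ C, c ∈ s (K c) := by
    intro c hc
    simp only [hKdef, dif_pos hc]
    exact ((hCmem c).1 hc).choose_spec
  set b : ℤ → A := fun c => a (K c) c with hbdef
  -- every element of W ℓ with ℓ ≥ K c takes value b c at c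
  have hkey : ∀ c ∈ C, ∀ ℓ, K c ≤ ℓ → ∀ z ∈ W ℓ, z c = b c := by
    intro c hc ℓ hℓ z hz
    have hz' : z ∈ W (K c) := hanti hℓ hz
    exact ((hmem _ z).1 hz').2 c (hKs c hc)
  have hxl : ∀ ℓ, x ℓ ∈ Λ := fun ℓ => ((hmem ℓ (x ℓ)).1 (hx ℓ)).1
  have hba : ∀ ℓ, ∀ i ∈ s ℓ, a ℓ i = b i := by
    intro ℓ i hi
    have hiC : i ∈ C := (hCmem i).2 ⟨ℓ, hi⟩
    have h1 : x (max ℓ (K i)) ∈ W ℓ := hanti (le_max_left _ _) (hx _)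
    have h2 := hkey i hiC (max ℓ (K i)) (le_max_right _ _) (x _) (hx _)
    rw [← ((hmem ℓ _).1 h1).2 i hi, h2]
  -- greatest constrained coordinate below i, least above i
  have hLgreat : ∀ i : ℤ, (∃ c, c ∈ C ∧ c < i) →
      ∃ ub, (ub ∈ C ∧ ub < i) ∧ ∀ z, z ∈ C ∧ z < i → z ≤ ub := fun i h =>
    Int.exists_greatest_of_bdd ⟨i, fun z hz => le_of_lt hz.2⟩ h
  have hRleast : ∀ i : ℤ, (∃ c, c ∈ C ∧ i < c) →
      ∃ lb, (lb ∈ C ∧ i < lb) ∧ ∀ z, z ∈ C ∧ i < z → lb ≤ z := fun i h =>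
    Int.exists_least_of_bdd ⟨i, fun z hz => le_of_lt hz.2⟩ h
  set PL : ℤ → Prop := fun i => ∃ c, c ∈ C ∧ c < i with hPLdef
  set PR : ℤ → Prop := fun i => ∃ c, c ∈ C ∧ i < c with hPRdef
  set L : ℤ → ℤ := fun i => if h : PL i then (hLgreat i h).choose else 0 with hLdef
  set R : ℤ → ℤ := fun i => if h : PR i then (hRleast i h).choose else 0 with hRdef
  have hLspec : ∀ i, (h : PL i) → (L i ∈ C ∧ L i < i) ∧ ∀ z, z ∈ C ∧ z < i → z ≤ L i := by
    intro i h
    simp only [hLdef, dif_pos h]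
    exact (hLgreat i h).choose_spec
  have hRspec : ∀ i, (h : PR i) → (R i ∈ C ∧ i < R i) ∧ ∀ z, z ∈ C ∧ i < z → R i ≤ z := by
    intro i h
    simp only [hRdef, dif_pos h]
    exact (hRleast i h).choose_spec
  set m : ℤ → ℕ := fun i =>
    max (if h : PL i then K (L i) else 0) (if h : PR i then K (R i) else 0) with hmdef
  set y : ℤ → A := fun i => if i ∈ C then b i else x (m i) i with hydef
  -- shift invariance of L, R on unconstrained coordinates
  have hPLiff : ∀ i : ℤ, i ∉ C → (PL i ↔ PL (i + 1)) := by
    intro i hi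
    constructor
    · rintro ⟨c, hc, hlt⟩; exact ⟨c, hc, hlt.trans (lt_add_one i)⟩
    · rintro ⟨c, hc, hlt⟩
      refine ⟨c, hc, lt_of_le_of_ne (Int.lt_add_one_iff.1 hlt) ?_⟩
      rintro rfl; exact hi hc
  have hPRiff : ∀ i : ℤ, i + 1 ∉ C → (PR i ↔ PR (i + 1)) := by
    intro i hi
    constructor
    · rintro ⟨c, hc, hlt⟩
      refine ⟨c, hc, lt_of_le_of_ne (Int.add_one_le_iff.2 hlt) ?_⟩
      rintro rfl; exact hi hc
    · rintro ⟨c, hc, hlt⟩; exact ⟨c, hc, (lt_add_one i).trans hlt⟩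
  have hLeq : ∀ i : ℤ, i ∉ C → L i = L (i + 1) := by
    intro i hi
    by_cases h : PL i
    · have h' : PL (i + 1) := (hPLiff i hi).1 h
      have s1 := hLspec i h
      have s2 := hLspec (i + 1) h'
      have d1 : L i ≤ L (i + 1) := s2.2 _ ⟨s1.1.1, s1.1.2.trans (lt_add_one i)⟩
      have d2 : L (i + 1) ≤ L i := by
        refine s1.2 _ ⟨s2.1.1, lt_of_le_of_ne (Int.lt_add_one_iff.1 s2.1.2) ?_⟩
        rintro h; rw [h] at s2; exact hi s2.1.1
      exact le_antisymm d1 d2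
    · have h' : ¬ PL (i + 1) := fun hh => h ((hPLiff i hi).2 hh)
      simp only [hLdef, dif_neg h, dif_neg h']
  have hReq : ∀ i : ℤ, i + 1 ∉ C → R i = R (i + 1) := by
    intro i hi
    by_cases h : PR (i + 1)
    · have h' : PR i := (hPRiff i hi).2 h
      have s1 := hRspec i h'
      have s2 := hRspec (i + 1) h
      have d1 : R i ≤ R (i + 1) := s1.2 _ ⟨s2.1.1, (lt_add_one i).trans s2.1.2⟩
      have d2 : R (i + 1) ≤ R i := by
        refine s2.2 _ ⟨s1.1.1, lt_of_le_of_ne (Int.add_one_le_iff.2 s1.1.2) ?_⟩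
        rintro h; rw [h] at hi; exact hi s1.1.1
      exact le_antisymm d1 d2
    · have h' : ¬ PR i := fun hh => h ((hPRiff i hi).1 hh)
      simp only [hRdef, dif_neg h, dif_neg h']
  have hmeq : ∀ i : ℤ, i ∉ C → i + 1 ∉ C → m i = m (i + 1) := by
    intro i hi hi1
    have e1 : PL i ↔ PL (i + 1) := hPLiff i hi
    have e2 : PR i ↔ PR (i + 1) := hPRiff i hi1
    have e3 := hLeq i hi
    have e4 := hReq i hi1
    simp only [hmdef, e3, e4]
    congr 1
    · by_cases h : PL (i + 1)
      · rw [dif_pos h, dif_pos (e1.2 h)]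
      · rw [dif_neg h, dif_neg (fun hh => h (e1.1 hh))]
    · by_cases h : PR (i + 1)
      · rw [dif_pos h, dif_pos (e2.2 h)]
      · rw [dif_neg h, dif_neg (fun hh => h (e2.1 hh))]
  -- witnesses agree with b at nearby constrained coordinates
  have hxmb : ∀ i c : ℤ, c ∈ C → K c ≤ m i → x (m i) c = b c :=
    fun i c hc hle => hkey c hc (m i) hle (x (m i)) (hx (m i))
  -- y is in the shift
  have hyΛ : y ∈ Λ := by
    rw [hΛ]
    intro i
    by_cases hi : i ∈ C <;> by_cases hi1 : (i + 1) ∈ C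
    · -- both constrained
      have hy1 : y i = b i := by simp [hydef, hi]
      have hy2 : y (i + 1) = b (i + 1) := by simp [hydef, hi1]
      set n := max (K i) (K (i + 1)) with hn
      have h1 : x n i = b i := hkey i hi n (le_max_left _ _) (x n) (hx n)
      have h2 : x n (i + 1) = b (i + 1) := hkey (i + 1) hi1 n (le_max_right _ _) (x n) (hx n)
      have := hΛ ▸ hxl n
      have hT := this i
      rw [h1, h2] at hT
      rwa [hy1, hy2]
    · -- i constrained, i+1 free
      have hPL1 : PL (i + 1) := ⟨i, hi, lt_add_one i⟩
      have hLi : L (i + 1) = i := by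
        have sp := hLspec (i + 1) hPL1
        refine le_antisymm ?_ (sp.2 i ⟨hi, lt_add_one i⟩)
        exact Int.lt_add_one_iff.1 sp.1.2
      have hKle : K i ≤ m (i + 1) := by
        have : (if h : PL (i + 1) then K (L (i + 1)) else 0) = K i := by
          rw [dif_pos hPL1, hLi]
        calc K i = _ := this.symm
          _ ≤ m (i + 1) := le_max_left _ _
      have h1 : x (m (i + 1)) i = b i := hxmb (i + 1) i hi hKle
      have hy1 : y i = b i := by simp [hydef, hi]
      have hy2 : y (i + 1) = x (m (i + 1)) (i + 1) := by simp [hydef, hi1]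
      have hT := (hΛ ▸ hxl (m (i + 1))) i
      rw [h1] at hT
      rwa [hy1, hy2]
    · -- i free, i+1 constrained
      have hPR1 : PR i := ⟨i + 1, hi1, lt_add_one i⟩
      have hRi : R i = i + 1 := by
        have sp := hRspec i hPR1
        refine le_antisymm ?_ (Int.add_one_le_iff.2 sp.1.2)
        exact sp.2 (i + 1) ⟨hi1, lt_add_one i⟩
      have hKle : K (i + 1) ≤ m i := by
        have : (if h : PR i then K (R i) else 0) = K (i + 1) := by
          rw [dif_pos hPR1, hRi]
        calc K (i + 1) = _ := this.symm
          _ ≤ m i := le_max_right _ _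
      have h2 : x (m i) (i + 1) = b (i + 1) := hxmb i (i + 1) hi1 hKle
      have hy1 : y i = x (m i) i := by simp [hydef, hi]
      have hy2 : y (i + 1) = b (i + 1) := by simp [hydef, hi1]
      have hT := (hΛ ▸ hxl (m i)) i
      rw [h2] at hT
      rwa [hy1, hy2]
    · -- both free
      have hme := hmeq i hi hi1
      have hy1 : y i = x (m i) i := by simp [hydef, hi]
      have hy2 : y (i + 1) = x (m i) (i + 1) := by
        simp [hydef, hi1, hme]
      have hT := (hΛ ▸ hxl (m i)) i
      rwa [hy1, hy2]
  -- conclude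
  refine ⟨y, Set.mem_iInter.2 (fun ℓ => ?_)⟩
  refine (hmem ℓ y).2 ⟨hyΛ, fun i hi => ?_⟩
  have hiC : i ∈ C := (hCmem i).2 ⟨ℓ, hi⟩
  have : y i = b i := by simp [hydef, hiC]
  rw [this, hba ℓ i hi]
end

section
/- Every Markov shift Λ ⊆ A^ℕ (over an arbitrary alphabet A) has the property of nested cylinders: every decreasing sequence of nonempty cylinder sets of Λ has nonempty intersection. -/
/-- Every Markov shift Λ ⊆ A^ℕ (arbitrary alphabet) has the
property of nested cylinders. -/
theorem stmt3 {A : Type*} (T : Set (A × A)) (Λ : Set (ℕ → A))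
    (hΛ : Λ = {x : ℕ → A | ∀ i : ℕ, (x i, x (i + 1)) ∈ T})
    (W : ℕ → Set (ℕ → A))
    (hcyl : ∀ ℓ, ∃ (s : Finset ℕ) (a : ℕ → A),
      W ℓ = {x ∈ Λ | ∀ i ∈ s, x i = a i})
    (hne : ∀ ℓ, (W ℓ).Nonempty)
    (hnested : ∀ ℓ, W (ℓ + 1) ⊆ W ℓ) :
    (⋂ ℓ, W ℓ).Nonempty := by
  classical
  choose s a hW using hcyl
  have hA : Antitone W := antitone_nat_of_succ_le hnested
  have hmem : ∀ ℓ x, x ∈ W ℓ ↔ x ∈ Λ ∧ ∀ i ∈ s ℓ, x i = a ℓ i := by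
    intro ℓ x
    rw [hW ℓ]
    exact Iff.rfl
  -- consistency of the constraints
  have cons : ∀ ℓ ℓ' i, i ∈ s ℓ → i ∈ s ℓ' → a ℓ i = a ℓ' i := by
    intro ℓ ℓ' i h h'
    obtain ⟨y, hy⟩ := hne (max ℓ ℓ')
    have h1 := (hmem ℓ y).1 (hA (le_max_left ℓ ℓ') hy)
    have h2 := (hmem ℓ' y).1 (hA (le_max_right ℓ ℓ') hy)
    rw [← h1.2 i h, ← h2.2 i h']
  -- key: a point of Λ satisfying all constraints at positions ≤ M
  have key : ∀ M : ℕ, ∃ y, y ∈ Λ ∧ ∀ ℓ i, i ∈ s ℓ → i ≤ M → y i = a ℓ i := by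
    intro M
    set L := (Finset.range (M + 1)).sup
        (fun i => if h : ∃ ℓ, i ∈ s ℓ then h.choose else 0) with hL
    obtain ⟨y, hy⟩ := hne L
    refine ⟨y, ((hmem L y).1 hy).1, ?_⟩
    intro ℓ i hi hiM
    have hex : ∃ ℓ', i ∈ s ℓ' := ⟨ℓ, hi⟩
    have hle : hex.choose ≤ L := by
      have h1 : (if h : ∃ ℓ', i ∈ s ℓ' then h.choose else 0) ≤ L := by
        rw [hL]
        exact Finset.le_sup (f := fun i => if h : ∃ ℓ', i ∈ s ℓ' then h.choose else 0)
          (Finset.mem_range.2 (Nat.lt_succ_of_le hiM))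
      rwa [dif_pos hex] at h1
    have h2 := ((hmem hex.choose y).1 (hA hle hy)).2 i hex.choose_spec
    rw [h2]
    exact cons _ ℓ i hex.choose_spec hi
  -- it suffices to find a point of Λ satisfying all constraints
  have suff : ∀ x, x ∈ Λ → (∀ ℓ i, i ∈ s ℓ → x i = a ℓ i) →
      (⋂ ℓ, W ℓ).Nonempty := by
    intro x hx h
    exact ⟨x, Set.mem_iInter.2 fun ℓ => (hmem ℓ x).2 ⟨hx, fun i hi => h ℓ i hi⟩⟩
  by_cases hbdd : ∃ N, ∀ ℓ i, i ∈ s ℓ → i ≤ N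
  · -- bounded case: a single point works
    obtain ⟨N, hN⟩ := hbdd
    obtain ⟨y, hy, hy2⟩ := key N
    exact suff y hy fun ℓ i hi => hy2 ℓ i hi (hN ℓ i hi)
  · -- unbounded case: glue points at constrained positions
    push_neg at hbdd
    have hub : ∀ n : ℕ, ∃ i, n ≤ i ∧ ∃ ℓ, i ∈ s ℓ := by
      intro n
      obtain ⟨ℓ, i, hi, hn⟩ := hbdd n
      exact ⟨i, hn.le, ℓ, hi⟩
    choose f hf1 hf2 using hub
    -- the sequence of gluing positions
    set t : ℕ → ℕ := fun k => Nat.rec (f 0) (fun _ p => f (p + 1)) k with ht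
    have ht0 : t 0 = f 0 := rfl
    have htsucc : ∀ k, t (k + 1) = f (t k + 1) := fun k => rfl
    have htmono : StrictMono t := by
      apply strictMono_nat_of_lt_succ
      intro k
      have := hf1 (t k + 1)
      rw [htsucc k]
      omega
    have htS : ∀ k, ∃ ℓ, t k ∈ s ℓ := by
      intro k
      cases k with
      | zero => exact hf2 0
      | succ k => rw [htsucc k]; exact hf2 (t k + 1)
    -- block index
    set K : ℕ → ℕ := fun n => Nat.findGreatest (fun k => t k ≤ n) n with hK
    have hK1 : ∀ n, n < t (K n + 1) := by
      intro n
      by_contra h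
      push_neg at h
      have hb : K n + 1 ≤ n := le_trans (htmono.le_apply) h
      exact Nat.findGreatest_is_greatest (P := fun k => t k ≤ n) (lt_add_one _) hb h
    -- glued points
    choose y hyΛ hyC using fun k => key (t (k + 1))
    set x : ℕ → A := fun n => y (K n) n with hx
    -- K is locally constant or jumps by one exactly at gluing positions
    have hKle : ∀ n, K n ≤ K (n + 1) := by
      intro n
      simp only [hK]
      exact Nat.findGreatest_mono (fun k hk => le_trans hk (Nat.le_succ n)) (Nat.le_succ n)
    have hKstep : ∀ n, (K (n + 1) = K n) ∨
        (K (n + 1) = K n + 1 ∧ n + 1 = t (K n + 1)) := by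
      intro n
      rcases lt_or_eq_of_le (Nat.succ_le_of_lt (hK1 n)) with h | h
      · -- n + 1 < t (K n + 1) : K stays
        left
        refine le_antisymm ?_ (hKle n)
        by_contra hc
        push_neg at hc
        have hne0 : K (n + 1) ≠ 0 := by omega
        have hP : t (K (n + 1)) ≤ n + 1 :=
          Nat.findGreatest_of_ne_zero (P := fun k => t k ≤ n + 1) rfl hne0
        have : t (K n + 1) ≤ t (K (n + 1)) := htmono.monotone hc
        omega
      · -- n + 1 = t (K n + 1) : K jumps
        right
        refine ⟨le_antisymm ?_ ?_, h⟩
        · by_contra hc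
          push_neg at hc
          have hne0 : K (n + 1) ≠ 0 := by omega
          have hP : t (K (n + 1)) ≤ n + 1 :=
            Nat.findGreatest_of_ne_zero (P := fun k => t k ≤ n + 1) rfl hne0
          have : t (K n + 1) < t (K (n + 1)) := htmono hc
          omega
        · apply Nat.le_findGreatest
          · calc K n + 1 ≤ t (K n + 1) := htmono.le_apply
              _ = n + 1 := h.symm
          · omega
    -- x ∈ Λ
    have hxΛ : x ∈ Λ := by
      rw [hΛ]
      intro n
      have hyn := hyΛ (K n)
      rw [hΛ] at hyn
      show (y (K n) n, y (K (n + 1)) (n + 1)) ∈ T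
      rcases hKstep n with h | ⟨h1, h2⟩
      · rw [h]
        exact hyn n
      · -- gluing position: the two points agree at n + 1
        obtain ⟨ℓ, hℓ⟩ := htS (K n + 1)
        have e1 : y (K n + 1) (n + 1) = a ℓ (n + 1) := by
          rw [h2]
          exact hyC (K n + 1) ℓ (t (K n + 1)) hℓ (htmono.monotone (Nat.le_succ (K n + 1)))
        have e2 : y (K n) (n + 1) = a ℓ (n + 1) := by
          rw [h2]
          exact hyC (K n) ℓ (t (K n + 1)) hℓ le_rfl
        rw [h1, e1, ← e2]
        exact hyn n
    -- x satisfies all constraints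
    refine suff x hxΛ ?_
    intro ℓ i hi
    exact hyC (K i) ℓ i hi (hK1 i).le
end

section
/- Let A be any alphabet, Λ ⊆ A^ℤ a Markov shift, and Φ: Λ → B^ℤ a locally finite-to-one sliding block code. Then the image Φ(Λ) is a shift space, i.e., it is closed in the product topology and shift-invariant. -/
/-- The image of a Markov shift Λ ⊆ A^ℤ under a locally
finite-to-one sliding block code is a shift space (closed and shift-invariant). -/
theorem stmt5 {A B : Type*} [TopologicalSpace B] [DiscreteTopology B]
    (T : Set (A × A)) (Λ : Set (ℤ → A))
    (hΛ : Λ = {x : ℤ → A | ∀ i : ℤ, (x i, x (i + 1)) ∈ T})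
    (n : ℕ) (φ : (Fin (2 * n + 1) → A) → B)
    -- local finiteness: each symbol b has finitely many preimage words among
    -- the (2n+1)-words occurring in Λ
    (hf2o : ∀ b : B, {w : Fin (2 * n + 1) → A |
      (∃ x ∈ Λ, ∃ j : ℤ, ∀ k : Fin (2 * n + 1), x (j + k) = w k) ∧ φ w = b}.Finite)
    (Φ : (ℤ → A) → (ℤ → B))
    (hΦ : ∀ x i, Φ x i = φ (fun k : Fin (2 * n + 1) => x (i - n + k))) :
    IsClosed (Φ '' Λ) ∧
    (∀ y ∈ Φ '' Λ, (fun i => y (i + 1)) ∈ Φ '' Λ) ∧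
    (∀ y ∈ Φ '' Λ, (fun i => y (i - 1)) ∈ Φ '' Λ) := by
  refine ⟨?_, ?_, ?_⟩
  · -- closedness
    apply isClosed_of_closure_subset
    intro y hy
    -- approximants
    have happrox : ∀ m : ℕ, ∃ x ∈ Λ, ∀ i : ℤ, -(m : ℤ) ≤ i → i ≤ m → Φ x i = y i := by
      intro m
      set V : Set (ℤ → B) := ⋂ i ∈ Finset.Icc (-(m : ℤ)) m, {z : ℤ → B | z i = y i} with hV
      have hVopen : IsOpen V := by
        apply isOpen_biInter_finset
        intro i _
        show IsOpen ((fun z : ℤ → B => z i) ⁻¹' {y i})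
        exact IsOpen.preimage (continuous_apply i) (isOpen_discrete ({y i} : Set B))
      have hyV : y ∈ V := by simp [hV]
      rcases mem_closure_iff.mp hy V hVopen hyV with ⟨z, hzV, x, hxΛ, rfl⟩
      refine ⟨x, hxΛ, fun i h1 h2 => ?_⟩
      have hmem : i ∈ Finset.Icc (-(m : ℤ)) m := by simp only [Finset.mem_Icc]; omega
      exact Set.mem_iInter₂.mp hzV i hmem
    choose X hXΛ hXy using happrox
    -- ultrafilter extending atTop
    let U : Ultrafilter ℕ := Ultrafilter.of Filter.atTop
    have hU : ∀ S : Set ℕ, S ∈ Filter.atTop → S ∈ U := fun S hS =>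
      Ultrafilter.of_le Filter.atTop hS
    -- the window words
    set W : ℤ → ℕ → (Fin (2 * n + 1) → A) := fun i m k => X m (i - n + k) with hW
    -- for m large, W i m lies in the finite preimage set of y i
    have hWfin : ∀ i : ℤ, ∀ m : ℕ, i.natAbs ≤ m →
        W i m ∈ {w : Fin (2 * n + 1) → A |
          (∃ x ∈ Λ, ∃ j : ℤ, ∀ k : Fin (2 * n + 1), x (j + k) = w k) ∧ φ w = y i} := by
      intro i m hm
      refine ⟨⟨X m, hXΛ m, i - n, fun k => rfl⟩, ?_⟩
      have := hΦ (X m) i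
      rw [hXy m i (by omega) (by omega)] at this
      exact this.symm
    -- along the ultrafilter, each window word is eventually constant
    have hkey : ∀ i : ℤ, ∃ w, w ∈ {w : Fin (2 * n + 1) → A |
          (∃ x ∈ Λ, ∃ j : ℤ, ∀ k : Fin (2 * n + 1), x (j + k) = w k) ∧ φ w = y i} ∧
        {m : ℕ | W i m = w} ∈ U := by
      intro i
      have hbig : (⋃ w ∈ {w : Fin (2 * n + 1) → A |
          (∃ x ∈ Λ, ∃ j : ℤ, ∀ k : Fin (2 * n + 1), x (j + k) = w k) ∧ φ w = y i},
          {m : ℕ | W i m = w}) ∈ U := by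
        refine Filter.mem_of_superset (hU {m : ℕ | i.natAbs ≤ m} ?_) ?_
        · exact Filter.eventually_atTop.mpr ⟨i.natAbs, fun m hm => hm⟩
        · intro m hm
          exact Set.mem_biUnion (hWfin i m hm) rfl
      rcases (Ultrafilter.finite_biUnion_mem_iff (hf2o (y i))).mp hbig with ⟨w, hw1, hw2⟩
      exact ⟨w, hw1, hw2⟩
    choose w hwmem hwU using hkey
    set x : ℤ → A := fun i => w i ⟨n, by omega⟩ with hx
    -- for finitely many positions, find a common large m
    have hcommon : ∀ (s : Finset ℤ) (N : ℕ), ∃ m, N ≤ m ∧ ∀ i ∈ s, W i m = w i := by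
      intro s N
      have h1 : {m : ℕ | N ≤ m} ∈ U := hU _ (Filter.eventually_atTop.mpr ⟨N, fun m hm => hm⟩)
      have h2 : (⋂ i ∈ s, {m : ℕ | W i m = w i}) ∈ U :=
        (Filter.biInter_finset_mem s).mpr (fun i _ => hwU i)
      have h3 : ({m : ℕ | N ≤ m} ∩ ⋂ i ∈ s, {m : ℕ | W i m = w i}) ∈ U :=
        Filter.inter_mem h1 h2
      rcases Filter.nonempty_of_mem h3 with ⟨m, hm1, hm2⟩
      exact ⟨m, hm1, fun i hi => Set.mem_iInter₂.mp hm2 i hi⟩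
    have hxX : ∀ i : ℤ, ∀ m : ℕ, W i m = w i → x i = X m i := by
      intro i m h
      have h2 := congrFun h (⟨n, by omega⟩ : Fin (2 * n + 1))
      have h3 : x i = W i m ⟨n, by omega⟩ := h2.symm
      rw [h3]
      show X m (i - (n : ℤ) + ((n : ℕ) : ℤ)) = X m i
      congr 1
      ring
    have hxΛ : x ∈ Λ := by
      rw [hΛ]
      intro i
      rcases hcommon {i, i + 1} 0 with ⟨m, _, hm⟩
      have e1 := hxX i m (hm i (by simp))
      have e2 := hxX (i + 1) m (hm (i + 1) (by simp))
      rw [e1, e2]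
      have := hXΛ m
      rw [hΛ] at this
      exact this i
    refine ⟨x, hxΛ, ?_⟩
    funext i
    rw [hΦ]
    rcases hcommon (Finset.image (fun k : Fin (2 * n + 1) => i - n + k) Finset.univ)
      i.natAbs with ⟨m, hmN, hm⟩
    have hxval : ∀ k : Fin (2 * n + 1), x (i - n + k) = X m (i - n + k) := by
      intro k
      exact hxX _ m (hm _ (Finset.mem_image.mpr ⟨k, Finset.mem_univ k, rfl⟩))
    have : (fun k : Fin (2 * n + 1) => x (i - n + k))
        = (fun k : Fin (2 * n + 1) => X m (i - n + k)) := funext hxval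
    rw [this, ← hΦ (X m) i]
    exact hXy m i (by omega) (by omega)
  · rintro y ⟨x, hxΛ, rfl⟩
    refine ⟨fun i => x (i + 1), ?_, ?_⟩
    · rw [hΛ] at *
      intro i
      have h := hxΛ (i + 1)
      simpa using h
    · funext i
      rw [hΦ, hΦ]
      congr 1
      funext k
      congr 1
      ring
  · rintro y ⟨x, hxΛ, rfl⟩
    refine ⟨fun i => x (i - 1), ?_, ?_⟩
    · rw [hΛ] at *
      intro i
      have h := hxΛ (i - 1)
      have e : i - 1 + 1 = i + 1 - 1 := by ring
      simpa [e] using h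
    · funext i
      rw [hΦ, hΦ]
      congr 1
      funext k
      congr 1
      ring
end

section
/- Let Ω ⊆ A^ℤ be the image of a shift of finite type Λ ⊆ B^ℤ under a locally finite-to-one sliding block code Φ. Then there exist a Markov shift Γ ⊆ E^ℤ (over some alphabet E) and a 1-block sliding block code Ψ: Γ → A^ℤ with Ψ(Γ) = Ω. Moreover W_1(Γ) is finite if and only if W_1(Ω) is finite, and when W_1(Ω) is infinite, W_1(Γ) has the same cardinality as W_1(Ω). -/
/-- W₁(X): the set of symbols occurring in points of X ⊆ A^ℤ. -/
def symbolsOf {A : Type*} (X : Set (ℤ → A)) : Set A :=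
  {a : A | ∃ x ∈ X, ∃ i : ℤ, x i = a}

/-- transitions for the higher-block Markov shift -/
def trans9 {B : Type} (m n : ℕ) (F : Set (Fin (m + 1) → B)) :
    Set ((Fin (2 * n + m + 1) → B) × (Fin (2 * n + m + 1) → B)) :=
  {p | (∀ k : Fin (2 * n + m), p.1 k.succ = p.2 k.castSucc) ∧
       (fun k : Fin (m + 1) => p.1 (Fin.castLE (by omega) k)) ∉ F}

def gamma9 {B : Type} (m n : ℕ) (F : Set (Fin (m + 1) → B)) :
    Set (ℤ → (Fin (2 * n + m + 1) → B)) :=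
  {y | ∀ i : ℤ, (y i, y (i + 1)) ∈ trans9 m n F}

def psi9 {A B : Type} (m n : ℕ) (φ : (Fin (2 * n + 1) → B) → A)
    (u : Fin (2 * n + m + 1) → B) : A :=
  φ (fun k => u (Fin.castLE (by omega) k))

/-- the higher-block map -/
def blk9 {B : Type} (m n : ℕ) (x : ℤ → B) : ℤ → (Fin (2 * n + m + 1) → B) :=
  fun i k => x (i - n + (k : ℤ))

lemma chain9 {B : Type} {m n : ℕ} {F : Set (Fin (m + 1) → B)}
    {y : ℤ → (Fin (2 * n + m + 1) → B)} (hy : y ∈ gamma9 m n F) :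
    ∀ (k : ℕ) (hk : k < 2 * n + m + 1) (i : ℤ), y i ⟨k, hk⟩ = y (i + k) 0 := by
  intro k
  induction k with
  | zero =>
    intro hk i
    have : (⟨0, hk⟩ : Fin (2 * n + m + 1)) = 0 := rfl
    rw [this]
    norm_num
  | succ k ih =>
    intro hk i
    have hk' : k < 2 * n + m := by omega
    have h1 : (⟨k + 1, hk⟩ : Fin (2 * n + m + 1)) = (⟨k, hk'⟩ : Fin (2 * n + m)).succ := rfl
    have h2 : (⟨k, hk'⟩ : Fin (2 * n + m)).castSucc = (⟨k, by omega⟩ : Fin (2 * n + m + 1)) := rfl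
    have h3 : y i (⟨k, hk'⟩ : Fin (2 * n + m)).succ
        = y (i + 1) (⟨k, hk'⟩ : Fin (2 * n + m)).castSucc := (hy i).1 ⟨k, hk'⟩
    rw [h1, h3, h2, ih (by omega) (i + 1)]
    congr 1
    push_cast
    ring

lemma gamma9_eq {B : Type} (m n : ℕ) (F : Set (Fin (m + 1) → B))
    (Λ : Set (ℤ → B))
    (hΛ : Λ = {x : ℤ → B | ∀ i : ℤ, (fun k : Fin (m + 1) => x (i + (k : ℤ))) ∉ F}) :
    gamma9 m n F = blk9 m n '' Λ := by
  ext y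
  constructor
  · intro hy
    refine ⟨fun j => y (j + n) 0, ?_, ?_⟩
    · rw [hΛ]
      intro j hF
      apply (hy (j + n)).2
      have hwin : ∀ k : Fin (m + 1), y (j + (n : ℤ)) (Fin.castLE (by omega) k)
          = y (j + (k : ℤ) + n) 0 := by
        intro k
        have hk : (k : ℕ) < 2 * n + m + 1 := by omega
        have h1 : (Fin.castLE (by omega : m + 1 ≤ 2 * n + m + 1) k)
            = (⟨(k : ℕ), hk⟩ : Fin (2 * n + m + 1)) := rfl
        rw [h1, chain9 hy (k : ℕ) hk (j + n)]
        congr 1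
        ring
      show (fun k : Fin (m + 1) => y (j + (n : ℤ)) (Fin.castLE (by omega) k)) ∈ F
      have : (fun k : Fin (m + 1) => y (j + (n : ℤ)) (Fin.castLE (by omega) k))
          = (fun k : Fin (m + 1) => (fun j => y (j + (n : ℤ)) 0) (j + (k : ℤ))) := by
        funext k
        rw [hwin k]
      rw [this]
      exact hF
    · funext i k
      show y (i - ↑n + ↑↑k + ↑n) 0 = y i k
      have hk : (k : ℕ) < 2 * n + m + 1 := k.isLt
      have : y i k = y (i + (k : ℕ)) 0 := by
        have := chain9 hy (k : ℕ) hk i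
        simpa using this
      rw [this]
      congr 1
      ring
  · rintro ⟨x, hx, rfl⟩
    intro i
    constructor
    · intro k
      show x (i - ↑n + ↑↑(k.succ)) = x (i + 1 - ↑n + ↑↑(k.castSucc))
      rw [Fin.val_succ, Fin.coe_castSucc]
      congr 1
      push_cast
      ring
    · rw [hΛ] at hx
      intro hF
      exact hx (i - n) hF

/-- If Ω ⊆ A^ℤ is the image of an SFT Λ ⊆ B^ℤ under a locally
finite-to-one sliding block code, then Ω is the image of a Markov shift
Γ ⊆ E^ℤ under a 1-block code Ψ; moreover W₁(Γ) is finite iff W₁(Ω) is finite,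
and they have the same cardinality when W₁(Ω) is infinite. -/
theorem stmt9 {A B : Type} (m : ℕ) (F : Set (Fin (m + 1) → B))
    (Λ : Set (ℤ → B))
    (hΛ : Λ = {x : ℤ → B | ∀ i : ℤ, (fun k : Fin (m + 1) => x (i + (k : ℤ))) ∉ F})
    (n : ℕ) (φ : (Fin (2 * n + 1) → B) → A)
    (hf2o : ∀ a : A, {w : Fin (2 * n + 1) → B |
      (∃ x ∈ Λ, ∃ j : ℤ, ∀ k : Fin (2 * n + 1), x (j + (k : ℤ)) = w k) ∧ φ w = a}.Finite)
    (Φ : (ℤ → B) → (ℤ → A))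
    (hΦ : ∀ x i, Φ x i = φ (fun k : Fin (2 * n + 1) => x (i - n + (k : ℤ))))
    (Ω : Set (ℤ → A)) (hΩ : Ω = Φ '' Λ) :
    ∃ (E : Type) (T : Set (E × E)) (Γ : Set (ℤ → E)) (ψ : E → A),
      -- Γ is a Markov shift
      Γ = {y : ℤ → E | ∀ i : ℤ, (y i, y (i + 1)) ∈ T} ∧
      -- the 1-block code Ψ(y)_i = ψ(y_i) maps Γ onto Ω
      (fun y : ℤ → E => fun i : ℤ => ψ (y i)) '' Γ = Ω ∧
      -- W₁(Γ) finite iff W₁(Ω) finite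
      ((symbolsOf Γ).Finite ↔ (symbolsOf Ω).Finite) ∧
      -- equal cardinalities in the infinite case
      (¬ (symbolsOf Ω).Finite →
        Cardinal.mk (symbolsOf Γ) = Cardinal.mk (symbolsOf Ω)) := by
  classical
  -- the one-block code composed with the higher-block map is Φ
  have hcomp : ∀ x : ℤ → B, (fun i : ℤ => psi9 m n φ (blk9 m n x i)) = Φ x := by
    intro x
    funext i
    rw [hΦ]
    rfl
  -- the image equality
  have himage : (fun y : ℤ → Fin (2 * n + m + 1) → B => fun i : ℤ => psi9 m n φ (y i)) ''
      gamma9 m n F = Ω := by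
    rw [hΩ, gamma9_eq m n F Λ hΛ, ← Set.image_comp]
    exact Set.image_congr fun x _ => hcomp x
  -- ψ maps the symbols of Γ onto the symbols of Ω
  have hψsur : psi9 m n φ '' symbolsOf (gamma9 m n F) = symbolsOf Ω := by
    ext a
    constructor
    · rintro ⟨u, ⟨y, hy, i, rfl⟩, rfl⟩
      exact ⟨fun i => psi9 m n φ (y i), himage ▸ ⟨y, hy, rfl⟩, i, rfl⟩
    · rintro ⟨z, hz, i, rfl⟩
      rw [← himage] at hz
      obtain ⟨y, hy, rfl⟩ := hz
      exact ⟨y i, ⟨y, hy, i, rfl⟩, rfl⟩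
  -- symbols of Γ are words over the symbols of Λ
  have hsub : ∀ u ∈ symbolsOf (gamma9 m n F), ∀ k, u k ∈ symbolsOf Λ := by
    rintro u ⟨y, hy, i, rfl⟩ k
    rw [gamma9_eq m n F Λ hΛ] at hy
    obtain ⟨x, hx, rfl⟩ := hy
    exact ⟨x, hx, i - n + (k : ℤ), rfl⟩
  -- symbols of Λ are covered by the finite fibers of the code
  have hScover : symbolsOf Λ ⊆ ⋃ a ∈ symbolsOf Ω,
      (fun w : Fin (2 * n + 1) → B => w 0) ''
        {w : Fin (2 * n + 1) → B |
          (∃ x ∈ Λ, ∃ j : ℤ, ∀ k : Fin (2 * n + 1), x (j + (k : ℤ)) = w k) ∧ φ w = a} := by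
    rintro b ⟨x, hx, j, rfl⟩
    have hφw : φ (fun k : Fin (2 * n + 1) => x (j + (k : ℤ))) = Φ x (j + n) := by
      rw [hΦ]
      congr 1
      funext k
      congr 1
      ring
    have ha : Φ x (j + n) ∈ symbolsOf Ω := ⟨Φ x, hΩ ▸ ⟨x, hx, rfl⟩, j + n, rfl⟩
    have hw : (fun k : Fin (2 * n + 1) => x (j + (k : ℤ))) ∈
        {w : Fin (2 * n + 1) → B |
          (∃ x ∈ Λ, ∃ j : ℤ, ∀ k : Fin (2 * n + 1), x (j + (k : ℤ)) = w k) ∧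
            φ w = Φ x (j + n)} := ⟨⟨x, hx, j, fun _ => rfl⟩, hφw⟩
    exact Set.mem_biUnion ha ⟨_, hw, by simp⟩
  -- finiteness transfer Ω → Λ
  have hΛfin : (symbolsOf Ω).Finite → (symbolsOf Λ).Finite := fun h =>
    Set.Finite.subset (h.biUnion fun a _ => (hf2o a).image _) hScover
  -- finiteness transfer Λ → Γ
  have hΓfin : (symbolsOf Λ).Finite → (symbolsOf (gamma9 m n F)).Finite := by
    intro h
    refine Set.Finite.subset (Set.Finite.pi fun _ : Fin (2 * n + m + 1) => h) ?_
    intro u hu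
    simp only [Set.mem_pi, Set.mem_univ, forall_true_left]
    exact fun k => hsub u hu k
  have hiff : (symbolsOf (gamma9 m n F)).Finite ↔ (symbolsOf Ω).Finite := by
    constructor
    · intro h
      rw [← hψsur]
      exact h.image _
    · intro h
      exact hΓfin (hΛfin h)
  refine ⟨Fin (2 * n + m + 1) → B, trans9 m n F, gamma9 m n F, psi9 m n φ, rfl, himage, hiff, ?_⟩
  -- the infinite case
  intro hinf
  haveI : Infinite (symbolsOf Ω) := Set.infinite_coe_iff.2 hinf
  have hΩℵ : Cardinal.aleph0 ≤ Cardinal.mk (symbolsOf Ω) := Cardinal.aleph0_le_mk_iff.2 this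
  -- #Λ-symbols ≤ #Ω-symbols
  have hSle : Cardinal.mk (symbolsOf Λ) ≤ Cardinal.mk (symbolsOf Ω) := by
    refine le_trans (Cardinal.mk_le_mk_of_subset hScover) ?_
    refine le_trans (Cardinal.mk_biUnion_le _ _) ?_
    have hsup : (⨆ a : symbolsOf Ω, Cardinal.mk
        ((fun w : Fin (2 * n + 1) → B => w 0) ''
          {w : Fin (2 * n + 1) → B |
            (∃ x ∈ Λ, ∃ j : ℤ, ∀ k : Fin (2 * n + 1), x (j + (k : ℤ)) = w k) ∧ φ w = ↑a}))
        ≤ Cardinal.aleph0 := by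
      refine ciSup_le' fun a => ?_
      exact ((hf2o a).image _).lt_aleph0.le
    calc Cardinal.mk (symbolsOf Ω) * _ ≤ Cardinal.mk (symbolsOf Ω) * Cardinal.aleph0 :=
          mul_le_mul_right hsup _
      _ ≤ Cardinal.mk (symbolsOf Ω) * Cardinal.mk (symbolsOf Ω) :=
          mul_le_mul_right hΩℵ _
      _ = Cardinal.mk (symbolsOf Ω) := Cardinal.mul_eq_self hΩℵ
  -- #Λ-symbols is infinite
  have hSℵ : Cardinal.aleph0 ≤ Cardinal.mk (symbolsOf Λ) := by
    by_contra h
    have hfin : (symbolsOf Λ).Finite := by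
      rw [← Set.not_infinite]
      intro hi
      exact h (Cardinal.aleph0_le_mk_iff.2 (Set.infinite_coe_iff.2 hi))
    exact hinf (hiff.1 (hΓfin hfin))
  -- #Γ-symbols ≤ #Λ-symbols
  have hΓle : Cardinal.mk (symbolsOf (gamma9 m n F)) ≤ Cardinal.mk (symbolsOf Λ) := by
    have hinj : Function.Injective
        (fun u : symbolsOf (gamma9 m n F) =>
          (fun k => (⟨u.1 k, hsub u.1 u.2 k⟩ : symbolsOf Λ) :
            Fin (2 * n + m + 1) → symbolsOf Λ)) := by
      intro u v huv
      ext k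
      exact congrArg Subtype.val (congrFun huv k)
    refine le_trans (Cardinal.mk_le_of_injective hinj) ?_
    have : Cardinal.mk (Fin (2 * n + m + 1) → symbolsOf Λ)
        = Cardinal.mk (symbolsOf Λ) ^ (2 * n + m + 1 : ℕ) := by
      rw [← Cardinal.power_def, Cardinal.mk_fin]
      norm_cast
    rw [this, Cardinal.power_nat_eq hSℵ (by omega)]
  -- conclude by antisymmetry
  refine le_antisymm (le_trans hΓle hSle) ?_
  rw [← hψsur]
  exact Cardinal.mk_image_le
end

section
/- Let Ω ⊆ A^ℤ be the image of a shift of finite type under a locally finite-to-one sliding block code. If W_1(Ω) is finite, then Ω is presented by a directed labeled graph with finitely many vertices and edges. If W_1(Ω) is infinite, then Ω is presented by a directed labeled graph whose edge set has the same cardinality as W_1(Ω) and whose vertex set has cardinality at most that of W_1(Ω). -/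
/-- The set of words of length `ℓ` occurring in points of `Λ`. -/
def Occ {B : Type} (Λ : Set (ℤ → B)) (ℓ : ℕ) : Set (Fin ℓ → B) :=
  {w | ∃ x ∈ Λ, ∃ j : ℤ, ∀ k : Fin ℓ, x (j + (k : ℤ)) = w k}

lemma occ_sub {B : Type} {Λ : Set (ℤ → B)} {ℓ ℓ' c : ℕ} (h : c + ℓ' ≤ ℓ)
    {w : Fin ℓ → B} (hw : w ∈ Occ Λ ℓ) :
    (fun k : Fin ℓ' => w ⟨c + k.1, by omega⟩) ∈ Occ Λ ℓ' := by
  obtain ⟨x, hx, j, hj⟩ := hw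
  refine ⟨x, hx, j + c, fun k => ?_⟩
  have h1 := hj ⟨c + k.1, by omega⟩
  have h2 : j + (c : ℤ) + (k : ℤ) = j + (((c + (k : ℕ) : ℕ)) : ℤ) := by push_cast; ring
  rw [h2]
  exact h1

/-- If Ω ⊆ A^ℤ is the image of an SFT under a locally
finite-to-one sliding block code, then Ω is presented by a directed labeled
graph which is finite when W₁(Ω) is finite, and whose edge set has the same
cardinality as W₁(Ω) (with vertex set of cardinality at most that of W₁(Ω))
when W₁(Ω) is infinite. -/
theorem stmt10 {A B : Type} (m : ℕ) (F : Set (Fin (m + 1) → B))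
    (Λ : Set (ℤ → B))
    (hΛ : Λ = {x : ℤ → B | ∀ i : ℤ, (fun k : Fin (m + 1) => x (i + (k : ℤ))) ∉ F})
    (n : ℕ) (φ : (Fin (2 * n + 1) → B) → A)
    (hf2o : ∀ a : A, {w : Fin (2 * n + 1) → B |
      (∃ x ∈ Λ, ∃ j : ℤ, ∀ k : Fin (2 * n + 1), x (j + (k : ℤ)) = w k) ∧ φ w = a}.Finite)
    (Φ : (ℤ → B) → (ℤ → A))
    (hΦ : ∀ x i, Φ x i = φ (fun k : Fin (2 * n + 1) => x (i - n + (k : ℤ))))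
    (Ω : Set (ℤ → A)) (hΩ : Ω = Φ '' Λ) :
    ∃ (V E : Type) (s t : E → V) (lab : E → A),
      -- the labeled graph (V, E, s, t, lab) presents Ω
      Ω = {y : ℤ → A | ∃ p : ℤ → E,
        (∀ i : ℤ, t (p i) = s (p (i + 1))) ∧ (∀ i : ℤ, y i = lab (p i))} ∧
      -- finite case
      ((symbolsOf Ω).Finite → (Finite V ∧ Finite E)) ∧
      -- infinite case
      (¬ (symbolsOf Ω).Finite →
        Cardinal.mk E = Cardinal.mk (symbolsOf Ω) ∧
        Cardinal.mk V ≤ Cardinal.mk (symbolsOf Ω)) := by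
  subst hΩ
  have hL2n : 2 * n ≤ max m (2 * n) := le_max_right _ _
  have hLm : m ≤ max m (2 * n) := le_max_left _ _
  set L := max m (2 * n) with hLdef
  set d := L - 2 * n with hddef
  have hd : d + 2 * n = L := by omega
  -- the fiber-finiteness in terms of Occ
  have hfib : ∀ a : A, {w : Fin (2 * n + 1) → B | w ∈ Occ Λ (2 * n + 1) ∧ φ w = a}.Finite :=
    fun a => hf2o a
  -- symbols of Ω are exactly φ-images of occurring windows
  have hsym : symbolsOf (Φ '' Λ) = φ '' (Occ Λ (2 * n + 1)) := by
    ext a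
    constructor
    · rintro ⟨y, ⟨x, hx, rfl⟩, i, rfl⟩
      refine ⟨fun k => x (i - n + (k : ℤ)), ⟨x, hx, i - n, fun k => rfl⟩, (hΦ x i).symm⟩
    · rintro ⟨w, ⟨x, hx, j, hj⟩, rfl⟩
      refine ⟨Φ x, ⟨x, hx, rfl⟩, j + n, ?_⟩
      rw [hΦ]
      congr 1
      funext k
      rw [← hj k]
      congr 1
      push_cast
      ring
  -- the labeled graph
  refine ⟨↥(Occ Λ L), ↥(Occ Λ (L + 1)),
    (fun e => ⟨fun k => e.1 ⟨0 + k.1, by have := k.2; omega⟩, occ_sub (by omega) e.2⟩),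
    (fun e => ⟨fun k => e.1 ⟨1 + k.1, by have := k.2; omega⟩, occ_sub (by omega) e.2⟩),
    (fun e => φ (fun k => e.1 ⟨d + k.1, by have := k.2; omega⟩)), ?_, ?_, ?_⟩
  · -- presentation
    ext y
    constructor
    · rintro ⟨x, hx, rfl⟩
      refine ⟨fun i => ⟨fun k : Fin (L + 1) => x (i - n - d + (k : ℤ)),
        ⟨x, hx, i - n - d, fun k => rfl⟩⟩, ?_, ?_⟩
      · intro i
        apply Subtype.ext
        funext k
        show x (i - n - d + _) = x (i + 1 - n - d + _)
        congr 1
        simp only [Fin.val_mk]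
        push_cast
        ring
      · intro i
        rw [hΦ]
        congr 1
        funext k
        congr 1
        simp only [Fin.val_mk]
        push_cast
        ring
    · rintro ⟨p, hpath, hlab⟩
      set x0 : ℤ → B := fun z => (p z).1 ⟨0, by omega⟩ with hx0
      have key : ∀ (k : ℕ) (_hk : k ≤ L) (z : ℤ), (p z).1 ⟨k, by omega⟩ = x0 (z + k) := by
        intro k
        induction k with
        | zero => intro _ z; simp [hx0]
        | succ k ih =>
          intro hk z
          have h1 : (p z).1 ⟨k + 1, by omega⟩ = (p (z + 1)).1 ⟨k, by omega⟩ := by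
            have h2 := congrFun (congrArg Subtype.val (hpath z)) ⟨k, by omega⟩
            simp only [Fin.val_mk] at h2
            have e1 : (⟨1 + k, by omega⟩ : Fin (L + 1)) = ⟨k + 1, by omega⟩ := by
              apply Fin.ext; simp [Nat.add_comm]
            have e2 : (⟨0 + k, by omega⟩ : Fin (L + 1)) = ⟨k, by omega⟩ := by
              apply Fin.ext; simp
            rw [e1, e2] at h2
            exact h2
          rw [h1, ih (by omega) (z + 1)]
          congr 1
          push_cast
          ring
      refine ⟨fun z => x0 (z + (d : ℤ) + n), ?_, ?_⟩
      · -- membership in Λ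
        rw [hΛ]
        intro i
        obtain ⟨x', hx', j, hj⟩ := (p (i + d + n)).2
        have hwin : (fun k : Fin (m + 1) => x0 (i + (k : ℤ) + d + n)) =
            (fun k : Fin (m + 1) => x' (j + (k : ℤ))) := by
          funext k
          have h2 := key k.1 (by have := k.2; omega) (i + d + n)
          have h3 := hj ⟨k.1, by have := k.2; omega⟩
          simp only [Fin.val_mk] at h3
          rw [h3, h2]
          congr 1
          push_cast
          ring
        intro hmem
        rw [hwin] at hmem
        rw [hΛ] at hx'
        exact hx' j hmem
      · -- Φ of it is y
        funext i
        rw [hΦ, hlab i]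
        congr 1
        funext k
        have h2 := key (d + k.1) (by have := k.2; omega) i
        rw [h2]
        congr 1
        push_cast
        ring
  · -- finite case
    intro hfin
    rw [hsym] at hfin
    have hWfin : (Occ Λ (2 * n + 1)).Finite := by
      have hsub : Occ Λ (2 * n + 1) ⊆
          ⋃ a ∈ φ '' Occ Λ (2 * n + 1), {w | w ∈ Occ Λ (2 * n + 1) ∧ φ w = a} := by
        intro w hw
        exact Set.mem_biUnion ⟨w, hw, rfl⟩ ⟨hw, rfl⟩
      exact Set.Finite.subset (hfin.biUnion (fun a _ => hfib a)) hsub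
    haveI : Finite ↥(Occ Λ (2 * n + 1)) := hWfin
    have hEfin : Finite ↥(Occ Λ (L + 1)) := by
      apply Finite.of_injective
        (fun (e : ↥(Occ Λ (L + 1))) (c : Fin (d + 1)) =>
          (⟨fun k : Fin (2 * n + 1) => e.1 ⟨c.1 + k.1, by have := c.2; have := k.2; omega⟩,
            occ_sub (by have := c.2; omega) e.2⟩ : ↥(Occ Λ (2 * n + 1))))
      intro e e' h
      apply Subtype.ext
      funext q
      have hq1 : min q.1 d ≤ d := min_le_right _ _
      have hq2 : q.1 - min q.1 d < 2 * n + 1 := by have := q.2; omega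
      have h2 := congrFun (congrArg Subtype.val (congrFun h ⟨min q.1 d, by omega⟩))
        ⟨q.1 - min q.1 d, by omega⟩
      simp only [Fin.val_mk] at h2
      have hq3 : (⟨min q.1 d + (q.1 - min q.1 d), by have := q.2; omega⟩ : Fin (L + 1)) = q := by
        apply Fin.ext; simp only [Fin.val_mk]; omega
      rw [hq3] at h2
      exact h2
    have hVfin : Finite ↥(Occ Λ L) := by
      apply Finite.of_surjective
        (fun (e : ↥(Occ Λ (L + 1))) =>
          (⟨fun k : Fin L => e.1 ⟨0 + k.1, by have := k.2; omega⟩,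
            occ_sub (by omega) e.2⟩ : ↥(Occ Λ L)))
      rintro ⟨w, x, hx, j, hj⟩
      refine ⟨⟨fun k : Fin (L + 1) => x (j + (k : ℤ)), ⟨x, hx, j, fun k => rfl⟩⟩, ?_⟩
      apply Subtype.ext
      funext k
      simp only [Fin.val_mk]
      rw [← hj k]
      congr 1
      push_cast
      simp
    exact ⟨hVfin, hEfin⟩
  · -- infinite case
    intro hinf
    rw [hsym] at hinf ⊢
    have hWinf : ¬ (Occ Λ (2 * n + 1)).Finite := fun h => hinf (h.image φ)
    haveI : Infinite ↥(Occ Λ (2 * n + 1)) := Set.infinite_coe_iff.mpr hWinf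
    haveI : Infinite ↥(φ '' Occ Λ (2 * n + 1)) := Set.infinite_coe_iff.mpr hinf
    have h1 : Cardinal.mk ↥(φ '' Occ Λ (2 * n + 1)) ≤ Cardinal.mk ↥(Occ Λ (L + 1)) := by
      apply Cardinal.mk_le_of_surjective
        (f := fun e : ↥(Occ Λ (L + 1)) =>
          (⟨φ (fun k : Fin (2 * n + 1) => e.1 ⟨d + k.1, by have := k.2; omega⟩),
            ⟨_, occ_sub (by omega) e.2, rfl⟩⟩ : ↥(φ '' Occ Λ (2 * n + 1))))
      rintro ⟨a, w, hw, rfl⟩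
      obtain ⟨x, hx, j, hj⟩ := hw
      refine ⟨⟨fun k : Fin (L + 1) => x (j - d + (k : ℤ)), ⟨x, hx, j - d, fun k => rfl⟩⟩, ?_⟩
      apply Subtype.ext
      show φ _ = φ w
      congr 1
      funext k
      rw [← hj k]
      congr 1
      simp only [Fin.val_mk]
      push_cast
      ring
    have h2 : Cardinal.mk ↥(Occ Λ (L + 1)) ≤ Cardinal.mk ↥(Occ Λ (2 * n + 1)) := by
      have hinj : Cardinal.mk ↥(Occ Λ (L + 1)) ≤
          Cardinal.mk (Fin (d + 1) → ↥(Occ Λ (2 * n + 1))) := by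
        apply Cardinal.mk_le_of_injective
          (f := fun (e : ↥(Occ Λ (L + 1))) (c : Fin (d + 1)) =>
            (⟨fun k : Fin (2 * n + 1) => e.1 ⟨c.1 + k.1, by have := c.2; have := k.2; omega⟩,
              occ_sub (by have := c.2; omega) e.2⟩ : ↥(Occ Λ (2 * n + 1))))
        intro e e' h
        apply Subtype.ext
        funext q
        have hq1 : min q.1 d ≤ d := min_le_right _ _
        have hq2 : q.1 - min q.1 d < 2 * n + 1 := by have := q.2; omega
        have h2 := congrFun (congrArg Subtype.val (congrFun h ⟨min q.1 d, by omega⟩))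
          ⟨q.1 - min q.1 d, by omega⟩
        simp only [Fin.val_mk] at h2
        have hq3 : (⟨min q.1 d + (q.1 - min q.1 d), by have := q.2; omega⟩ : Fin (L + 1)) = q := by
          apply Fin.ext; simp only [Fin.val_mk]; omega
        rw [hq3] at h2
        exact h2
      refine hinj.trans (le_of_eq ?_)
      rw [← Cardinal.power_def, Cardinal.mk_fin]
      exact Cardinal.power_nat_eq (Cardinal.aleph0_le_mk _) (by omega)
    have h3 : Cardinal.mk ↥(Occ Λ (2 * n + 1)) ≤ Cardinal.mk ↥(φ '' Occ Λ (2 * n + 1)) := by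
      set f : ↥(Occ Λ (2 * n + 1)) → ↥(φ '' Occ Λ (2 * n + 1)) :=
        fun w => ⟨φ w.1, ⟨w.1, w.2, rfl⟩⟩ with hf
      have hfb : ∀ b, Cardinal.mk (f ⁻¹' {b}) ≤ Cardinal.aleph0 := by
        intro b
        have hfinb : (f ⁻¹' {b}).Finite := by
          have hsub : f ⁻¹' {b} ⊆
              Subtype.val ⁻¹' {w | w ∈ Occ Λ (2 * n + 1) ∧ φ w = b.1} := by
            rintro w hw
            exact ⟨w.2, congrArg Subtype.val hw⟩
          exact ((hfib b.1).preimage (Subtype.val_injective.injOn)).subset hsub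
        exact hfinb.lt_aleph0.le
      calc Cardinal.mk ↥(Occ Λ (2 * n + 1))
          ≤ Cardinal.mk ↥(φ '' Occ Λ (2 * n + 1)) * Cardinal.aleph0 :=
            Cardinal.mk_le_mk_mul_of_mk_preimage_le f hfb
        _ = Cardinal.mk ↥(φ '' Occ Λ (2 * n + 1)) :=
            Cardinal.mul_aleph0_eq (Cardinal.aleph0_le_mk _)
    have h4 : Cardinal.mk ↥(Occ Λ L) ≤ Cardinal.mk ↥(Occ Λ (L + 1)) := by
      apply Cardinal.mk_le_of_surjective
        (f := fun (e : ↥(Occ Λ (L + 1))) =>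
          (⟨fun k : Fin L => e.1 ⟨0 + k.1, by have := k.2; omega⟩,
            occ_sub (by omega) e.2⟩ : ↥(Occ Λ L)))
      rintro ⟨w, x, hx, j, hj⟩
      refine ⟨⟨fun k : Fin (L + 1) => x (j + (k : ℤ)), ⟨x, hx, j, fun k => rfl⟩⟩, ?_⟩
      apply Subtype.ext
      funext k
      simp only [Fin.val_mk]
      rw [← hj k]
      congr 1
      push_cast
      simp
    exact ⟨le_antisymm (h2.trans h3) h1, h4.trans (h2.trans h3)⟩
end

section
/- Let A = ℕ and let Ω ⊆ (ℕ × ℕ)^ℤ be the set of all sequences y with y_i = (x_i, x_{i + x_i}) for some x ∈ ℕ^ℤ. For each left-infinite sequence a = (a_i)_{i ≤ -1} ∈ ℕ^{ℤ_{<0}}, consider the left-infinite configuration y^-_a with y^-_a(i) = (2|i| - 1, a_i) for i ≤ -1. Then y^-_a extends to a point of Ω, and this extension is unique: any two points of Ω agreeing with y^-_a on all coordinates i ≤ -1 are equal. -/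
/-- The canonical preimage sequence. -/
def Xfun (a : ℤ → ℕ) : ℤ → ℕ :=
  fun i => if i < 0 then 2 * i.natAbs - 1 else a (-(i + 1))

lemma Xfun_neg (a : ℤ → ℕ) {i : ℤ} (hi : i < 0) :
    Xfun a i = 2 * i.natAbs - 1 := if_pos hi

lemma Xfun_cast (a : ℤ → ℕ) {i : ℤ} (hi : i < 0) :
    (Xfun a i : ℤ) = 2 * i.natAbs - 1 := by
  rw [Xfun_neg a hi]
  have h1 : (i.natAbs : ℤ) = -i := by omega
  push_cast [Nat.cast_sub (by omega : 1 ≤ 2 * i.natAbs)]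
  ring

lemma Xfun_shift (a : ℤ → ℕ) {i : ℤ} (hi : i < 0) :
    Xfun a (i + (Xfun a i : ℤ)) = a i := by
  have hn : (i.natAbs : ℤ) = -i := by omega
  have h : i + (Xfun a i : ℤ) = i.natAbs - 1 := by rw [Xfun_cast a hi]; omega
  rw [h, Xfun, if_neg (by omega)]
  congr 1
  omega

lemma key (a : ℤ → ℕ) (y : ℤ → ℕ × ℕ) (x : ℤ → ℕ)
    (hx : ∀ i : ℤ, y i = (x i, x (i + (x i : ℤ))))
    (hy : ∀ i : ℤ, i < 0 → y i = (2 * i.natAbs - 1, a i)) :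
    x = Xfun a := by
  have h1 : ∀ i : ℤ, i < 0 → x i = 2 * i.natAbs - 1 := fun i hi => by
    have := (hx i).symm.trans (hy i hi)
    exact (Prod.mk.injEq _ _ _ _ ▸ this).1
  have h2 : ∀ i : ℤ, i < 0 → x (i + (x i : ℤ)) = a i := fun i hi => by
    have := (hx i).symm.trans (hy i hi)
    exact (Prod.mk.injEq _ _ _ _ ▸ this).2
  funext i
  rcases lt_or_ge i 0 with hi | hi
  · rw [h1 i hi, Xfun_neg a hi]
  · -- i ≥ 0; use j = -(i+1)
    set j : ℤ := -(i + 1) with hj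
    have hjn : j < 0 := by omega
    have hcast : (x j : ℤ) = 2 * j.natAbs - 1 := by
      rw [h1 j hjn]
      push_cast [Nat.cast_sub (by omega : 1 ≤ 2 * j.natAbs)]
      ring
    have habs : (j.natAbs : ℤ) = i + 1 := by omega
    have hshift : j + (x j : ℤ) = i := by rw [hcast]; omega
    have := h2 j hjn
    rw [hshift] at this
    rw [this, Xfun, if_neg (by omega)]

/-- For Ω = {((x_i, x_{i+x_i}))_i : x ∈ ℕ^ℤ} ⊆ (ℕ×ℕ)^ℤ and any
left-infinite sequence a, the configuration i ↦ (2|i|-1, a_i) on the negative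
coordinates extends to a point of Ω, and the extension is unique. -/
theorem stmt12 (Ω : Set (ℤ → ℕ × ℕ))
    (hΩ : Ω = {y : ℤ → ℕ × ℕ |
      ∃ x : ℤ → ℕ, ∀ i : ℤ, y i = (x i, x (i + (x i : ℤ)))})
    (a : ℤ → ℕ) :
    -- existence of an extension
    (∃ y ∈ Ω, ∀ i : ℤ, i < 0 → y i = (2 * i.natAbs - 1, a i)) ∧
    -- uniqueness of the extension
    (∀ y ∈ Ω, ∀ z ∈ Ω,
      (∀ i : ℤ, i < 0 → y i = (2 * i.natAbs - 1, a i)) →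
      (∀ i : ℤ, i < 0 → z i = (2 * i.natAbs - 1, a i)) → y = z) := by
  subst hΩ
  constructor
  · refine ⟨fun i => (Xfun a i, Xfun a (i + (Xfun a i : ℤ))), ⟨Xfun a, fun i => rfl⟩, ?_⟩
    intro i hi
    show (Xfun a i, Xfun a (i + (Xfun a i : ℤ))) = _
    rw [Xfun_shift a hi, Xfun_neg a hi]
  · rintro y ⟨x, hx⟩ z ⟨x', hx'⟩ hy hz
    have e1 := key a y x hx hy
    have e2 := key a z x' hx' hz
    subst e1; subst e2
    funext i
    rw [hx i, hx' i]
end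

section
/- Let Ω ⊆ (ℕ × ℕ)^ℤ be the set of all sequences y with y_i = (x_i, x_{i + x_i}) for some x ∈ ℕ^ℤ. Then Ω cannot be presented by any directed labeled graph with countably many vertices: every labeled graph whose bi-infinite path label sequences equal Ω has uncountably many vertices. -/
/-- The configuration `x` associated to `a : ℕ → ℕ`: odd numbers on negatives,
`a` on nonnegatives. -/
def xa (a : ℕ → ℕ) (i : ℤ) : ℕ := if i < 0 then 2 * (-i).toNat - 1 else a i.toNat

lemma xa_neg (a : ℕ → ℕ) (n : ℕ) : xa a (-(n + 1 : ℕ)) = 2 * n + 1 := by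
  have h : (-(n + 1 : ℕ) : ℤ) < 0 := by push_cast; omega
  simp only [xa, if_pos h]
  omega

lemma xa_nonneg (a : ℕ → ℕ) (n : ℕ) : xa a (n : ℤ) = a n := by
  simp [xa]

lemma arith (n : ℕ) : (-(n + 1 : ℕ) : ℤ) + ((2 * n + 1 : ℕ) : ℤ) = (n : ℤ) := by
  push_cast; ring

lemma unc_nat_fun : Uncountable (ℕ → ℕ) := by
  rw [← not_countable_iff]
  intro h
  obtain ⟨f, hf⟩ := exists_surjective_nat (ℕ → ℕ)
  obtain ⟨n, hn⟩ := hf (fun k => f k k + 1)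
  have := congrFun hn n
  omega

/-- Every directed labeled graph presenting
Ω = {((x_i, x_{i+x_i}))_i : x ∈ ℕ^ℤ} ⊆ (ℕ×ℕ)^ℤ has uncountably many vertices. -/
theorem stmt13 (Ω : Set (ℤ → ℕ × ℕ))
    (hΩ : Ω = {y : ℤ → ℕ × ℕ |
      ∃ x : ℤ → ℕ, ∀ i : ℤ, y i = (x i, x (i + (x i : ℤ)))})
    {V E : Type*} (s t : E → V) (lab : E → ℕ × ℕ)
    (hpres : Ω = {y : ℤ → ℕ × ℕ | ∃ p : ℤ → E,
      (∀ i : ℤ, t (p i) = s (p (i + 1))) ∧ (∀ i : ℤ, y i = lab (p i))}) :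
    ¬ Countable V := by
  intro hV
  -- the configuration `ya a` lies in Ω, hence has a presenting path
  have hmem : ∀ a : ℕ → ℕ, ∃ p : ℤ → E,
      (∀ i : ℤ, t (p i) = s (p (i + 1))) ∧
      (∀ i : ℤ, (xa a i, xa a (i + (xa a i : ℤ))) = lab (p i)) := by
    intro a
    have h1 : (fun i => (xa a i, xa a (i + (xa a i : ℤ)))) ∈ Ω := by
      rw [hΩ]; exact ⟨xa a, fun i => rfl⟩
    rw [hpres] at h1
    obtain ⟨p, hp1, hp2⟩ := h1
    exact ⟨p, hp1, fun i => hp2 i⟩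
  choose p hp hlab using hmem
  have hinj : Function.Injective (fun a => s (p a 0)) := by
    intro a b hab
    simp only at hab
    -- splice the two paths at time 0
    set q : ℤ → E := fun i => if i < 0 then p a i else p b i with hq
    have hpath : ∀ i : ℤ, t (q i) = s (q (i + 1)) := by
      intro i
      rcases lt_trichotomy i (-1) with h | h | h
      · simp only [hq, if_pos (show i < 0 by omega), if_pos (show i + 1 < 0 by omega)]
        exact hp a i
      · subst h
        simp only [hq, if_pos (show (-1 : ℤ) < 0 by norm_num),
          if_neg (show ¬ (-1 : ℤ) + 1 < 0 by norm_num)]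
        have := hp a (-1)
        simp only [neg_add_cancel] at this ⊢
        rw [this, hab]
      · simp only [hq, if_neg (show ¬ i < 0 by omega), if_neg (show ¬ i + 1 < 0 by omega)]
        exact hp b i
    have hy : (fun i => lab (q i)) ∈ Ω := by
      rw [hpres]; exact ⟨q, hpath, fun i => rfl⟩
    rw [hΩ] at hy
    obtain ⟨x, hx⟩ := hy
    funext n
    -- from position -(n+1): x(-(n+1)) = 2n+1 and x(n) = a n
    have hneg : lab (q (-(n + 1 : ℕ))) = (2 * n + 1, a n) := by
      have hlt : (-(n + 1 : ℕ) : ℤ) < 0 := by push_cast; omega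
      rw [hq]
      simp only [if_pos hlt]
      rw [← hlab a]
      rw [xa_neg, arith, xa_nonneg]
    have h1 := hx (-(n + 1 : ℕ))
    simp only at h1
    rw [hneg] at h1
    have hx1 : x (-(n + 1 : ℕ)) = 2 * n + 1 := (Prod.mk.injEq _ _ _ _ ▸ h1.symm).1
    have hx2 : x ((-(n + 1 : ℕ) : ℤ) + (x (-(n + 1 : ℕ)) : ℤ)) = a n :=
      (Prod.mk.injEq _ _ _ _ ▸ h1.symm).2
    rw [hx1] at hx2
    rw [arith] at hx2
    -- from position n: x(n) = b n
    have hpos : lab (q (n : ℤ)) = (b n, xa b ((n : ℤ) + (xa b n : ℤ))) := by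
      rw [hq]
      simp only [if_neg (show ¬ (n : ℤ) < 0 by omega)]
      rw [← hlab b, xa_nonneg]
    have h2 := hx (n : ℤ)
    simp only at h2
    rw [hpos] at h2
    have hx3 : x (n : ℤ) = b n := (Prod.mk.injEq _ _ _ _ ▸ h2.symm).1
    rw [hx3] at hx2
    exact hx2.symm
  have : Countable (ℕ → ℕ) := hinj.countable
  exact @not_countable _ unc_nat_fun this
end

section
/- Let Ω ⊆ (ℕ × ℕ)^ℤ be the set of all sequences y with y_i = (x_i, x_{i + x_i}) for some x ∈ ℕ^ℤ. Then Ω is not the image of any shift of finite type under a locally finite-to-one sliding block code. -/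
private def xAux (f : ℕ → ℕ) (i : ℤ) : ℕ :=
  if i < 0 then (2 * (-i)).toNat else if i = 0 then 0 else f ((i - 1).toNat)

private lemma xAux_neg (f : ℕ → ℕ) (k : ℕ) (hk : 1 ≤ k) : xAux f (-(k : ℤ)) = 2 * k := by
  simp only [xAux]
  rw [if_pos (by omega : (-(k : ℤ)) < 0)]
  omega

private lemma xAux_pos (f : ℕ → ℕ) (k : ℕ) (hk : 1 ≤ k) : xAux f (k : ℤ) = f (k - 1) := by
  simp only [xAux]
  rw [if_neg (by omega), if_neg (by omega)]
  congr 1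
  omega

private def yAux (f : ℕ → ℕ) (i : ℤ) : ℕ × ℕ := (xAux f i, xAux f (i + (xAux f i : ℤ)))

private lemma yAux_neg (f : ℕ → ℕ) (k : ℕ) (hk : 1 ≤ k) :
    yAux f (-(k : ℤ)) = (2 * k, f (k - 1)) := by
  unfold yAux
  rw [xAux_neg f k hk]
  rw [show (-(k : ℤ) + ((2 * k : ℕ) : ℤ)) = (k : ℤ) by push_cast; ring]
  rw [xAux_pos f k hk]

private lemma yAux_pos_fst (f : ℕ → ℕ) (k : ℕ) (hk : 1 ≤ k) :
    (yAux f (k : ℤ)).1 = f (k - 1) := by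
  unfold yAux
  simp [xAux_pos f k hk]

/-- Ω = {((x_i, x_{i+x_i}))_i : x ∈ ℕ^ℤ} ⊆ (ℕ×ℕ)^ℤ is not the
image of any shift of finite type under a locally finite-to-one sliding block
code. -/
theorem stmt14 (Ω : Set (ℤ → ℕ × ℕ))
    (hΩ : Ω = {y : ℤ → ℕ × ℕ |
      ∃ x : ℤ → ℕ, ∀ i : ℤ, y i = (x i, x (i + (x i : ℤ)))})
    {B : Type*} (m : ℕ) (F : Set (Fin (m + 1) → B))
    (Λ : Set (ℤ → B))
    (hΛ : Λ = {x : ℤ → B | ∀ i : ℤ, (fun k : Fin (m + 1) => x (i + (k : ℤ))) ∉ F})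
    (n : ℕ) (φ : (Fin (2 * n + 1) → B) → ℕ × ℕ)
    -- the sliding block code is locally finite-to-one
    (hf2o : ∀ c : ℕ × ℕ, {w : Fin (2 * n + 1) → B |
      (∃ x ∈ Λ, ∃ j : ℤ, ∀ k : Fin (2 * n + 1), x (j + (k : ℤ)) = w k) ∧ φ w = c}.Finite)
    (Φ : (ℤ → B) → (ℤ → ℕ × ℕ))
    (hΦ : ∀ x i, Φ x i = φ (fun k : Fin (2 * n + 1) => x (i - n + (k : ℤ)))) :
    Φ '' Λ ≠ Ω := by
  intro hE
  classical
  obtain ⟨M, hMm, hMn⟩ : ∃ M : ℕ, m ≤ M ∧ 2 * n ≤ M :=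
    ⟨max m (2 * n), le_max_left _ _, le_max_right _ _⟩
  -- each yAux f lies in Ω, hence has a preimage z f in Λ
  have hz0 : ∀ f : ℕ → ℕ, ∃ zf, zf ∈ Λ ∧ Φ zf = fun i => yAux f i := by
    intro f
    have hy : (fun i => yAux f i) ∈ Ω := by
      rw [hΩ]; exact ⟨xAux f, fun i => rfl⟩
    rw [← hE] at hy
    rcases hy with ⟨zf, h1, h2⟩
    exact ⟨zf, h1, h2⟩
  choose z hzΛ hzΦ using hz0
  have hzSFT : ∀ f i, (fun k : Fin (m + 1) => z f (i + (k : ℤ))) ∉ F := by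
    intro f
    have := hzΛ f
    rw [hΛ] at this
    exact this
  -- the set of windows of Λ is countable
  set W : Set (Fin (2 * n + 1) → B) :=
    {w | ∃ x ∈ Λ, ∃ j : ℤ, ∀ k : Fin (2 * n + 1), x (j + (k : ℤ)) = w k} with hWdef
  have hWc : W.Countable := by
    have hsub : W ⊆ ⋃ c : ℕ × ℕ, {w : Fin (2 * n + 1) → B |
        (∃ x ∈ Λ, ∃ j : ℤ, ∀ k : Fin (2 * n + 1), x (j + (k : ℤ)) = w k) ∧ φ w = c} := by
      intro w hw
      exact Set.mem_iUnion.2 ⟨φ w, hw, rfl⟩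
    exact (Set.countable_iUnion fun c => (hf2o c).countable).mono hsub
  set S : Set (ℕ → ℕ) := {f | ∀ j, j < n → f j = 0} with hSdef
  set L : ℕ := M - 2 * n + 1 with hLdef
  set V : (ℕ → ℕ) → Fin L → Fin (2 * n + 1) → B :=
    fun f s t => z f ((-(M : ℤ) + ((s : ℕ) : ℤ)) + ((t : ℕ) : ℤ)) with hVdef
  have hVW : ∀ f s, V f s ∈ W := fun f s =>
    ⟨z f, hzΛ f, -(M : ℤ) + ((s : ℕ) : ℤ), fun t => rfl⟩
  -- key injectivity
  have key : ∀ f ∈ S, ∀ g ∈ S, V f = V g → f = g := by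
    intro f hf g hg hV
    have hagree : ∀ i : ℤ, -(M : ℤ) ≤ i → i ≤ 0 → z f i = z g i := by
      intro i h1 h2
      have ht : ∃ s : Fin L, ∃ t : Fin (2 * n + 1),
          (-(M : ℤ) + ((s : ℕ) : ℤ)) + ((t : ℕ) : ℤ) = i := by
        rcases le_or_gt (i + M) (2 * n) with h | h
        · refine ⟨⟨0, by omega⟩, ⟨(i + M).toNat, by omega⟩, ?_⟩
          simp only [Fin.val_mk]
          omega
        · refine ⟨⟨(i + M).toNat - 2 * n, by omega⟩, ⟨2 * n, by omega⟩, ?_⟩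
          simp only [Fin.val_mk]
          omega
      obtain ⟨s, t, hst⟩ := ht
      calc z f i = V f s t := by rw [hVdef]; exact congrArg (z f) hst.symm
        _ = V g s t := by rw [hV]
        _ = z g i := by rw [hVdef]; exact congrArg (z g) hst
    -- splice the past of z f with the future of z g
    set w : ℤ → B := fun i => if i ≤ 0 then z f i else z g i with hwdef
    have hwΛ : w ∈ Λ := by
      rw [hΛ]
      intro i hiF
      rcases le_or_gt (i + m) 0 with hc | hc
      · have hEq : (fun k : Fin (m + 1) => w (i + (k : ℤ))) =
            (fun k : Fin (m + 1) => z f (i + (k : ℤ))) := by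
          funext k
          have hkb : ((k : ℕ) : ℤ) ≤ (m : ℤ) := by
            exact_mod_cast Nat.lt_succ_iff.mp k.isLt
          have hp : i + ((k : ℕ) : ℤ) ≤ 0 := by omega
          simp only [hwdef]
          rw [if_pos hp]
        exact hzSFT f i (hEq ▸ hiF)
      · have hEq : (fun k : Fin (m + 1) => w (i + (k : ℤ))) =
            (fun k : Fin (m + 1) => z g (i + (k : ℤ))) := by
          funext k
          have hkb : (0 : ℤ) ≤ ((k : ℕ) : ℤ) := Int.natCast_nonneg _
          by_cases hp : i + ((k : ℕ) : ℤ) ≤ 0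
          · simp only [hwdef]
            rw [if_pos hp]
            exact hagree _ (by omega) hp
          · simp only [hwdef]
            rw [if_neg hp]
        exact hzSFT g i (hEq ▸ hiF)
    have hwΩ : Φ w ∈ Ω := by
      have := Set.mem_image_of_mem Φ hwΛ
      rwa [hE] at this
    rw [hΩ] at hwΩ
    obtain ⟨x'', hx''⟩ := hwΩ
    have hleft : ∀ k : ℕ, n + 1 ≤ k → Φ w (-(k : ℤ)) = yAux f (-(k : ℤ)) := by
      intro k hk
      have h1 : Φ w (-(k : ℤ)) = Φ (z f) (-(k : ℤ)) := by
        rw [hΦ, hΦ]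
        congr 1
        funext t
        have htb : ((t : ℕ) : ℤ) ≤ 2 * n := by
          exact_mod_cast Nat.lt_succ_iff.mp t.isLt
        have hp : -(k : ℤ) - n + ((t : ℕ) : ℤ) ≤ 0 := by omega
        simp only [hwdef]
        rw [if_pos hp]
      rw [h1, hzΦ f]
    have hright : ∀ k : ℕ, n + 1 ≤ k → Φ w (k : ℤ) = yAux g (k : ℤ) := by
      intro k hk
      have h1 : Φ w (k : ℤ) = Φ (z g) (k : ℤ) := by
        rw [hΦ, hΦ]
        congr 1
        funext t
        have htb : (0 : ℤ) ≤ ((t : ℕ) : ℤ) := Int.natCast_nonneg _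
        have hp : ¬ ((k : ℤ) - n + ((t : ℕ) : ℤ) ≤ 0) := by omega
        simp only [hwdef]
        rw [if_neg hp]
      rw [h1, hzΦ g]
    have hfg : ∀ j : ℕ, n ≤ j → f j = g j := by
      intro j hj
      have hk : n + 1 ≤ j + 1 := by omega
      have hA : Φ w (-((j + 1 : ℕ) : ℤ)) = (2 * (j + 1), f (j + 1 - 1)) := by
        rw [hleft (j + 1) hk, yAux_neg f (j + 1) (by omega)]
      have hB : (Φ w ((j + 1 : ℕ) : ℤ)).1 = g (j + 1 - 1) := by
        rw [hright (j + 1) hk]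
        exact yAux_pos_fst g (j + 1) (by omega)
      have e1 := hx'' (-((j + 1 : ℕ) : ℤ))
      have e2 := hx'' ((j + 1 : ℕ) : ℤ)
      rw [hA] at e1
      have e1a : 2 * (j + 1) = x'' (-((j + 1 : ℕ) : ℤ)) := congrArg Prod.fst e1
      have e1b : f (j + 1 - 1) = x'' (-((j + 1 : ℕ) : ℤ) + ((x'' (-((j + 1 : ℕ) : ℤ)) : ℕ) : ℤ)) :=
        congrArg Prod.snd e1
      rw [← e1a] at e1b
      rw [show (-((j + 1 : ℕ) : ℤ) + ((2 * (j + 1) : ℕ) : ℤ)) = ((j + 1 : ℕ) : ℤ) by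
        push_cast; ring] at e1b
      have e2a : (Φ w ((j + 1 : ℕ) : ℤ)).1 = x'' ((j + 1 : ℕ) : ℤ) := by
        rw [e2]
      rw [hB] at e2a
      simp only [Nat.add_sub_cancel] at e1b e2a
      rw [e1b, ← e2a]
    funext j
    by_cases hj : j < n
    · rw [hf j hj, hg j hj]
    · exact hfg j (le_of_not_gt hj)
  -- countability of S
  have hSc : S.Countable := by
    haveI := hWc.to_subtype
    set Ψ : ↥S → (Fin L → ↥W) := fun f s => ⟨V f.1 s, hVW f.1 s⟩ with hΨdef
    have hΨ : Function.Injective Ψ := by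
      intro a b hab
      apply Subtype.ext
      apply key a.1 a.2 b.1 b.2
      funext s
      exact congrArg Subtype.val (congrFun hab s)
    exact Set.countable_coe_iff.mp hΨ.countable
  --S surjects onto ℕ → ℕ, which is uncountable (Cantor)
  haveI := hSc.to_subtype
  have hsurj : Function.Surjective (fun p : ↥S => (fun j => p.1 (j + n) : ℕ → ℕ)) := by
    intro g
    refine ⟨⟨fun j => if j < n then 0 else g (j - n), fun j hj => if_pos hj⟩, ?_⟩
    funext j
    simp only
    rw [if_neg (by omega)]
    congr 1
    omega
  haveI : Countable (ℕ → ℕ) := hsurj.countable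
  haveI : Countable (Set ℕ) := by
    have hs2 : Function.Surjective (fun f : ℕ → ℕ => {j | f j = 0}) := by
      intro s
      refine ⟨fun j => if j ∈ s then 0 else 1, ?_⟩
      ext j
      by_cases hj : j ∈ s <;> simp [hj]
    exact hs2.countable
  obtain ⟨emb⟩ := countable_iff_nonempty_embedding.mp this
  exact Function.cantor_injective emb emb.injective
end
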